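/- arXiv:2301.09384 — 3 statements merged into one kernel-verified Lean document; each statement's English description precedes it below -/
import Mathlib

section
/- Let A and B be commutative Banach algebras with B Jacobson semisimple (i.e., the intersection of the kernels of all nonzero multiplicative linear functionals on B is {0}). Then every algebra homomorphism φ : A → B is continuous. -/
/-! A multiplicative functional on a Banach algebra extends to a character of the unitization,
and characters of unital Banach algebras are bounded. Hence for every character `χ` of `B`,
both `χ` and `χ ∘ φ` are continuous. If `uₙ → x` and `φ uₙ → y`, then `χ y = χ (φ x)` for all
characters, so `y = φ x` by semisimplicity, and the closed graph theorem applies. -/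

open Filter Topology WithLp

theorem NonUnitalAlgHom.continuous_of_completeSpace {𝕜 A : Type*} [NormedField 𝕜]
    [CompleteSpace 𝕜] [NonUnitalNormedRing A] [NormedSpace 𝕜 A] [IsScalarTower 𝕜 A A]
    [SMulCommClass 𝕜 A A] [CompleteSpace A] (χ : A →ₙₐ[𝕜] 𝕜) :
    Continuous χ := by
  let ψ : WithLp 1 (Unitization 𝕜 A) →ₐ[𝕜] 𝕜 :=
    (Unitization.lift χ).comp (unitizationAlgEquiv 𝕜).toAlgHom
  have hχ : ⇑χ = ψ ∘ fun a : A ↦ toLp 1 (a : Unitization 𝕜 A) := by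
    ext a
    simp [ψ]
  rw [hχ]
  exact (map_continuous ψ).comp unitization_isometry_inr.continuous

theorem LinearMap.continuous_of_map_mul {𝕜 A : Type*} [NormedField 𝕜]
    [CompleteSpace 𝕜] [NonUnitalNormedRing A] [NormedSpace 𝕜 A] [IsScalarTower 𝕜 A A]
    [SMulCommClass 𝕜 A A] [CompleteSpace A] (χ : A →ₗ[𝕜] 𝕜)
    (hχ : ∀ u v, χ (u * v) = χ u * χ v) :
    Continuous χ :=
  NonUnitalAlgHom.continuous_of_completeSpace { χ with map_zero' := χ.map_zero, map_mul' := hχ }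

theorem LinearMap.continuous_of_separating_continuous_comp {𝕜 E F : Type*}
    [NontriviallyNormedField 𝕜] [NormedAddCommGroup E] [NormedSpace 𝕜 E] [CompleteSpace E]
    [NormedAddCommGroup F] [NormedSpace 𝕜 F] [CompleteSpace F] (φ : E →ₗ[𝕜] F)
    (P : (F →ₗ[𝕜] 𝕜) → Prop) (hsep : ∀ y, (∀ χ, P χ → χ y = 0) → y = 0)
    (hχ : ∀ χ, P χ → Continuous χ) (hχφ : ∀ χ, P χ → Continuous (χ ∘ₗ φ)) :
    Continuous φ := by
  refine φ.continuous_of_seq_closed_graph fun u x y hu hφu ↦ sub_eq_zero.mp <| hsep _ fun χ hPχ ↦ ?_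
  have hy : Tendsto (χ ∘ φ ∘ u) atTop (𝓝 (χ y)) := ((hχ χ hPχ).tendsto y).comp hφu
  have hφx : Tendsto (χ ∘ φ ∘ u) atTop (𝓝 (χ (φ x))) := ((hχφ χ hPχ).tendsto x).comp hu
  rw [map_sub, tendsto_nhds_unique hy hφx, sub_self]

/-- Let `A` and `B` be commutative (not necessarily unital) Banach algebras over `ℂ`,
and suppose `B` is Jacobson semisimple in the sense that the only element annihilated by
every nonzero multiplicative linear functional on `B` is `0`.  Then every algebra
homomorphism (i.e. multiplicative linear map) `φ : A → B` is continuous. -/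
theorem homomorphism_continuous_of_semisimple
    {A B : Type*}
    [NonUnitalNormedCommRing A] [NormedSpace ℂ A] [IsScalarTower ℂ A A]
    [SMulCommClass ℂ A A] [CompleteSpace A]
    [NonUnitalNormedCommRing B] [NormedSpace ℂ B] [IsScalarTower ℂ B B]
    [SMulCommClass ℂ B B] [CompleteSpace B]
    (hsemi : ∀ y : B,
      (∀ χ : B →ₗ[ℂ] ℂ, (∀ u v : B, χ (u * v) = χ u * χ v) → χ ≠ 0 → χ y = 0) → y = 0)
    (φ : A →ₗ[ℂ] B) (hφ : ∀ x y : A, φ (x * y) = φ x * φ y) :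
    Continuous φ := by
  refine φ.continuous_of_separating_continuous_comp
    (fun χ ↦ (∀ u v, χ (u * v) = χ u * χ v) ∧ χ ≠ 0)
    (fun y h ↦ hsemi y fun χ hmul hne ↦ h χ ⟨hmul, hne⟩) (fun χ hχ ↦ χ.continuous_of_map_mul hχ.1)
    fun χ hχ ↦ (χ ∘ₗ φ).continuous_of_map_mul fun u v ↦ ?_
  simp only [LinearMap.comp_apply, hφ, hχ.1]
end

section
/- Every nonzero multiplicative linear functional χ on the commutative Banach algebra L¹(ℝ^{2n}) ⊕ T¹ is of the form χ(f, A) = F_σ(f)(z) + (-1)^j F_W(A)(z) for some unique z ∈ ℝ^{2n} and j ∈ ℤ/2ℤ. -/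
/-!
Restricted to `L¹`, a nonzero character `χ` of `L¹ ⊕ T¹` is still a character (were it zero,
`χ(0,A)² = χ(A ∗ A, 0)` would force `χ = 0`), hence evaluation of `F_σ` at some `z`. Then
`χ(0,A) χ(0,B) = χ(A ∗ B, 0) = F_W(A)(z) F_W(B)(z)`, so `A ↦ χ(0,A)` is `±F_W(·)(z)`.
The pair `(z, ±)` is unique because `F_σ` separates points and some `F_W(A)(z)` is nonzero.
-/

open MeasureTheory Complex

noncomputable section

/-- `ℝⁿ`. -/
abbrev En (n : ℕ) := EuclideanSpace ℝ (Fin n)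

/-- Phase space `ℝ^{2n}`. -/
abbrev Phase (n : ℕ) := En n × En n

/-- The standard symplectic form on `ℝ^{2n}`. -/
def symp {n : ℕ} (z w : Phase n) : ℝ := (inner ℝ z.2 w.1 : ℝ) - (inner ℝ z.1 w.2 : ℝ)

/-- `L¹(ℝ^{2n})`. -/
abbrev L1n (n : ℕ) := MeasureTheory.Lp (α := Phase n) ℂ 1 volume

/-- The symplectic Fourier transform `F_σ(f)(w) = (2π)^{-n} ∫ f(z) e^{-iσ(w,z)} dz`. -/
def symplFT {n : ℕ} (f : L1n n) (w : Phase n) : ℂ :=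
  ((2 * Real.pi) ^ n : ℝ)⁻¹ • ∫ z, f z * Complex.exp (-Complex.I * Complex.ofReal (symp w z))

variable {n : ℕ}
variable (T1 : Type*) [NormedAddCommGroup T1] [NormedSpace ℂ T1] [CompleteSpace T1]

/-- The product on `L¹(ℝ^{2n}) ⊕ T¹`:
`(f,A) ∗ (g,B) = (f∗g + A∗B, f∗B + g∗A)`, expressed in terms of the three
convolutions (function-function, operator-operator, function-operator). -/
def qmul (convL1 : L1n n →ₗ[ℂ] L1n n →ₗ[ℂ] L1n n)
    (convTT : T1 →ₗ[ℂ] T1 →ₗ[ℂ] L1n n)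
    (convFT : L1n n →ₗ[ℂ] T1 →ₗ[ℂ] T1)
    (a b : L1n n × T1) : L1n n × T1 :=
  (convL1 a.1 b.1 + convTT a.2 b.2, convFT a.1 b.2 + convFT b.1 a.2)

open LinearMap

theorem Fin.neg_one_pow_val_injective {R : Type*} [Monoid R] [HasDistribNeg R]
    (h : (-1 : R) ≠ 1) : Function.Injective fun j : Fin 2 => (-1 : R) ^ (j : ℕ) := by
  intro j k hjk
  fin_cases j <;> fin_cases k <;> simp_all [eq_comm]

theorem exists_neg_one_pow_mul_of_mul_eq_mul {α K : Type*} [Field K] {φ ψ : α → K}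
    (h : ∀ x y, φ x * φ y = ψ x * ψ y) : ∃ j : Fin 2, ∀ x, φ x = (-1) ^ (j : ℕ) * ψ x := by
  by_cases hψ : ∀ x, ψ x = 0
  · exact ⟨0, fun x => by simpa [hψ] using h x x⟩
  obtain ⟨x₀, hx₀⟩ := not_forall.mp hψ
  have of_sign (j : Fin 2) (hj : φ x₀ = (-1) ^ (j : ℕ) * ψ x₀) (x : α) :
      φ x = (-1) ^ (j : ℕ) * ψ x := by
    have hsq : ((-1 : K) ^ (j : ℕ)) * (-1) ^ (j : ℕ) = 1 := by
      rw [← pow_add, ← two_mul, pow_mul]; simp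
    refine mul_right_cancel₀ hx₀ ?_
    linear_combination (-1) ^ (j : ℕ) * h x x₀ - (-1) ^ (j : ℕ) * φ x * hj - φ x * ψ x₀ * hsq
  rcases mul_self_eq_mul_self_iff.mp (h x₀ x₀) with hpos | hneg
  · exact ⟨0, of_sign 0 (by simpa using hpos)⟩
  · exact ⟨1, of_sign 1 (by simpa using hneg)⟩

section Characters

variable {E : Type*} [NormedAddCommGroup E] [NormedSpace ℂ E]
  {convL1 : L1n n →ₗ[ℂ] L1n n →ₗ[ℂ] L1n n} {convTT : E →ₗ[ℂ] E →ₗ[ℂ] L1n n}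
  {convFT : L1n n →ₗ[ℂ] E →ₗ[ℂ] E} {χ : (L1n n × E) →ₗ[ℂ] ℂ}

theorem comp_inl_map_convL1 (hχ : ∀ a b, χ (qmul E convL1 convTT convFT a b) = χ a * χ b)
    (f g : L1n n) :
    (χ ∘ₗ inl ℂ _ _) (convL1 f g) = (χ ∘ₗ inl ℂ _ _) f * (χ ∘ₗ inl ℂ _ _) g := by
  simpa [qmul] using hχ (f, 0) (g, 0)

theorem comp_inl_map_convTT (hχ : ∀ a b, χ (qmul E convL1 convTT convFT a b) = χ a * χ b)
    (A B : E) :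
    (χ ∘ₗ inl ℂ _ _) (convTT A B) = (χ ∘ₗ inr ℂ _ _) A * (χ ∘ₗ inr ℂ _ _) B := by
  simpa [qmul] using hχ (0, A) (0, B)

theorem comp_inl_ne_zero (hχ : ∀ a b, χ (qmul E convL1 convTT convFT a b) = χ a * χ b)
    (hχne : χ ≠ 0) : χ ∘ₗ inl ℂ (L1n n) E ≠ 0 := by
  intro h
  have hinr : χ ∘ₗ inr ℂ (L1n n) E = 0 := by
    ext A
    simpa [h] using (comp_inl_map_convTT hχ A A).symm
  exact hχne (by rw [← coprod_comp_inl_inr χ, h, hinr, coprod_zero_left, zero_comp])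

end Characters

theorem eq_of_symplFT_add_neg_one_pow_mul_FW {E : Type*} [AddCommMonoid E] [Module ℂ E]
    (FW : E →ₗ[ℂ] (Phase n → ℂ))
    (hsep : ∀ z : Phase n, ∃ A : E, FW A z ≠ 0)
    (hptsep : ∀ z w : Phase n, z ≠ w → ∃ f : L1n n, symplFT f z ≠ symplFT f w)
    {p q : Phase n × Fin 2}
    (h : ∀ (f : L1n n) (A : E), symplFT f p.1 + (-1 : ℂ) ^ (p.2 : ℕ) * FW A p.1 =
      symplFT f q.1 + (-1 : ℂ) ^ (q.2 : ℕ) * FW A q.1) : p = q := by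
  obtain ⟨w, j⟩ := p
  obtain ⟨z, k⟩ := q
  obtain rfl : w = z := by
    by_contra hne
    obtain ⟨f, hf⟩ := hptsep w z hne
    exact hf (by simpa using h f 0)
  obtain ⟨A, hA⟩ := hsep w
  have hsign : (-1 : ℂ) ^ (j : ℕ) = (-1) ^ (k : ℕ) :=
    mul_right_cancel₀ hA (by simpa using h 0 A)
  rw [Fin.neg_one_pow_val_injective (by norm_num) hsign]

theorem characters_of_L1_oplus_T1
    (FW : T1 →ₗ[ℂ] (Phase n → ℂ))
    (convL1 : L1n n →ₗ[ℂ] L1n n →ₗ[ℂ] L1n n)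
    (convTT : T1 →ₗ[ℂ] T1 →ₗ[ℂ] L1n n)
    (convFT : L1n n →ₗ[ℂ] T1 →ₗ[ℂ] T1)
    -- the Gelfand theory of `L¹(ℝ^{2n})`:
    (hL1char : ∀ χ₀ : L1n n →ₗ[ℂ] ℂ, (∀ f g, χ₀ (convL1 f g) = χ₀ f * χ₀ g) → χ₀ ≠ 0 →
      ∃ z : Phase n, ∀ f, χ₀ f = symplFT f z)
    -- compatibility of the Fourier transforms with the convolutions:
    (hTT : ∀ (S T : T1) (z : Phase n), symplFT (convTT S T) z = FW S z * FW T z)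
    -- there exist operators with nonvanishing Fourier–Weyl transform:
    (hsep : ∀ z : Phase n, ∃ A : T1, FW A z ≠ 0)
    -- `F_σ` separates the points of `ℝ^{2n}`:
    (hptsep : ∀ z w : Phase n, z ≠ w → ∃ f : L1n n, symplFT f z ≠ symplFT f w)
    (χ : (L1n n × T1) →ₗ[ℂ] ℂ)
    (hχmul : ∀ a b, χ (qmul T1 convL1 convTT convFT a b) = χ a * χ b)
    (hχne : χ ≠ 0) :
    ∃! p : Phase n × Fin 2, ∀ (f : L1n n) (A : T1),
      χ (f, A) = symplFT f p.1 + (-1 : ℂ) ^ (p.2 : ℕ) * FW A p.1 := by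
  obtain ⟨z, hz⟩ :=
    hL1char _ (comp_inl_map_convL1 hχmul) (comp_inl_ne_zero hχmul hχne)
  obtain ⟨j, hj⟩ := exists_neg_one_pow_mul_of_mul_eq_mul (φ := χ ∘ₗ inr ℂ _ _)
    (ψ := fun A => FW A z) fun A B => by rw [← comp_inl_map_convTT hχmul, hz, hTT]
  have hrepr (f : L1n n) (A : T1) :
      χ (f, A) = symplFT f z + (-1 : ℂ) ^ (j : ℕ) * FW A z := by
    rw [← coprod_comp_inl_inr χ, coprod_apply, hz, hj]
  refine ⟨(z, j), hrepr, fun p hp => ?_⟩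
  exact eq_of_symplFT_add_neg_one_pow_mul_FW FW hsep hptsep fun f A =>
    (hp f A).symm.trans (hrepr f A)
end
end

section
/- Let S be a Segal algebra in L¹(ℝ^{2n}) and A ∈ T¹ a regular operator (F_W(A)(z) ≠ 0 for all z). Then S^A := {(f, g∗A) : f, g ∈ S}, with norm ‖(f, g∗A)‖ = ‖f‖_S + ‖A‖_{T¹}‖g‖_S, is a quantum Segal algebra; in particular ‖·‖ is well-defined (g∗A determines g), S^A is a Banach algebra under the QHA product, and is dense in L¹ ⊕ T¹. -/
open MeasureTheory Complex

noncomputable section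

variable {n : ℕ}
variable (T1 : Type*) [NormedAddCommGroup T1] [NormedSpace ℂ T1] [CompleteSpace T1]

/-! Since `F_W(g ∗ A₀) = F_σ(g) · F_W(A₀)` and `F_W(A₀)` vanishes nowhere, injectivity of `F_σ`
makes `g ↦ g ∗ A₀` injective and forces `L¹` to be commutative. The associativity rules
`(f ∗ A₀) ∗ (g ∗ A₀) = (f ∗ g) ∗ (A₀ ∗ A₀)` and `f ∗ (g ∗ A₀) = (f ∗ g) ∗ A₀` bring every component
of a product in `S^{A₀}` back into `S`, and `S` absorbs the `L¹` factor `A₀ ∗ A₀` with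
`‖A₀ ∗ A₀‖ ≤ ‖A₀‖²`, which expands to the product of the norms. Density: `g ↦ g ∗ A₀` is continuous
with dense range (Werner), so it carries the dense `S ⊆ L¹` to a dense subset of `T¹`. -/

theorem integrable_mul_exp_symp (f : L1n n) (w : Phase n) :
    Integrable (fun z => f z * exp (-I * (symp w z : ℂ))) := by
  refine (L1.integrable_coeFn f).mul_bdd (c := 1) ?_ (.of_forall fun z => ?_)
  · unfold symp
    fun_prop
  · simp [norm_exp]

theorem symplFT_sub (f g : L1n n) (w : Phase n) :
    symplFT (f - g) w = symplFT f w - symplFT g w := by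
  unfold symplFT
  rw [← smul_sub, ← integral_sub (integrable_mul_exp_symp f w) (integrable_mul_exp_symp g w)]
  congr 1
  refine integral_congr_ae ?_
  filter_upwards [Lp.coeFn_sub f g] with z hz
  rw [hz, Pi.sub_apply, sub_mul]

section Convolutions

variable {T : Type*} [AddCommGroup T] [Module ℂ T] {FW : T →ₗ[ℂ] (Phase n → ℂ)}
  {convL1 : L1n n →ₗ[ℂ] L1n n →ₗ[ℂ] L1n n} {convFT : L1n n →ₗ[ℂ] T →ₗ[ℂ] T}

theorem symplFT_convL1 (hFT : ∀ f A z, FW (convFT f A) z = symplFT f z * FW A z)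
    (hassoc : ∀ u v A, convFT u (convFT v A) = convFT (convL1 u v) A)
    {A : T} {z : Phase n} (hA : FW A z ≠ 0) (u v : L1n n) :
    symplFT (convL1 u v) z = symplFT u z * symplFT v z := by
  refine mul_right_cancel₀ hA ?_
  rw [← hFT, ← hassoc, hFT, hFT, mul_assoc]

theorem convL1_comm (hFT : ∀ f A z, FW (convFT f A) z = symplFT f z * FW A z)
    (hassoc : ∀ u v A, convFT u (convFT v A) = convFT (convL1 u v) A)
    (hFσinj : ∀ f : L1n n, (∀ z, symplFT f z = 0) → f = 0)
    {A : T} (hA : ∀ z, FW A z ≠ 0) (u v : L1n n) : convL1 u v = convL1 v u := by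
  refine sub_eq_zero.mp (hFσinj _ fun z => ?_)
  rw [symplFT_sub, symplFT_convL1 hFT hassoc (hA z), symplFT_convL1 hFT hassoc (hA z), mul_comm,
    sub_self]

theorem injective_flip_convFT (hFT : ∀ f A z, FW (convFT f A) z = symplFT f z * FW A z)
    (hFσinj : ∀ f : L1n n, (∀ z, symplFT f z = 0) → f = 0)
    {A : T} (hA : ∀ z, FW A z ≠ 0) : Function.Injective (convFT.flip A) := by
  refine (injective_iff_map_eq_zero _).mpr fun u hu => hFσinj u fun z => ?_
  have hFW := hFT u A z
  rw [← LinearMap.flip_apply, hu, map_zero, Pi.zero_apply] at hFW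
  exact (mul_eq_zero.mp hFW.symm).resolve_right (hA z)

end Convolutions

section SegalAlgebra

variable {S : Type*} [NormedAddCommGroup S] [NormedSpace ℂ S] {ι : S →ₗ[ℂ] L1n n}
  {convL1 : L1n n →ₗ[ℂ] L1n n →ₗ[ℂ] L1n n}

theorem exists_convFT_convFT_eq {T : Type*} [AddCommGroup T] [Module ℂ T]
    {convFT : L1n n →ₗ[ℂ] T →ₗ[ℂ] T}
    (hassoc : ∀ u v A, convFT u (convFT v A) = convFT (convL1 u v) A)
    (hSmul : ∀ f g : S, ∃ h : S, ι h = convL1 (ι f) (ι g) ∧ ‖h‖ ≤ ‖f‖ * ‖g‖)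
    (A : T) (f g : S) :
    ∃ h : S, convFT (ι f) (convFT (ι g) A) = convFT (ι h) A ∧ ‖h‖ ≤ ‖f‖ * ‖g‖ := by
  obtain ⟨h, hh, hnh⟩ := hSmul f g
  exact ⟨h, by rw [hassoc, hh], hnh⟩

/-- `(g ∗ A) ∗ (g' ∗ A) = (g ∗ g') ∗ (A ∗ A)`, and commutativity puts the `L¹` factor `A ∗ A`
on the side where `S` absorbs it. -/
theorem exists_convTT_convFT_eq {T : Type*} [NormedAddCommGroup T] [NormedSpace ℂ T]
    {convTT : T →ₗ[ℂ] T →ₗ[ℂ] L1n n} {convFT : L1n n →ₗ[ℂ] T →ₗ[ℂ] T}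
    (hcomm : ∀ u v, convL1 u v = convL1 v u)
    (hassoc : ∀ u v A B, convTT (convFT u A) (convFT v B) = convL1 (convL1 u v) (convTT A B))
    (hSmul : ∀ f g : S, ∃ h : S, ι h = convL1 (ι f) (ι g) ∧ ‖h‖ ≤ ‖f‖ * ‖g‖)
    (hSideal : ∀ (f : L1n n) (g : S), ∃ h : S, ι h = convL1 f (ι g) ∧ ‖h‖ ≤ ‖f‖ * ‖g‖)
    {A : T} (hA : ‖convTT A A‖ ≤ ‖A‖ * ‖A‖) (g g' : S) :
    ∃ q : S, convTT (convFT (ι g) A) (convFT (ι g') A) = ι q ∧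
      ‖q‖ ≤ ‖A‖ * ‖A‖ * (‖g‖ * ‖g'‖) := by
  obtain ⟨p, hp, hnp⟩ := hSmul g g'
  obtain ⟨q, hq, hnq⟩ := hSideal (convTT A A) p
  exact ⟨q, by rw [hassoc, ← hp, hcomm, hq], hnq.trans (mul_le_mul hA hnp (norm_nonneg _)
    (by positivity))⟩

theorem exists_qmul_eq {T : Type*} [NormedAddCommGroup T] [NormedSpace ℂ T]
    {convTT : T →ₗ[ℂ] T →ₗ[ℂ] L1n n} {convFT : L1n n →ₗ[ℂ] T →ₗ[ℂ] T}
    (hcomm : ∀ u v, convL1 u v = convL1 v u)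
    (hassoc₁ : ∀ u v A B, convTT (convFT u A) (convFT v B) = convL1 (convL1 u v) (convTT A B))
    (hassoc₂ : ∀ u v A, convFT u (convFT v A) = convFT (convL1 u v) A)
    (hSmul : ∀ f g : S, ∃ h : S, ι h = convL1 (ι f) (ι g) ∧ ‖h‖ ≤ ‖f‖ * ‖g‖)
    (hSideal : ∀ (f : L1n n) (g : S), ∃ h : S, ι h = convL1 f (ι g) ∧ ‖h‖ ≤ ‖f‖ * ‖g‖)
    {A : T} (hA : ‖convTT A A‖ ≤ ‖A‖ * ‖A‖) (f g f' g' : S) :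
    ∃ f'' g'' : S,
      qmul T convL1 convTT convFT (ι f, convFT (ι g) A) (ι f', convFT (ι g') A)
        = (ι f'', convFT (ι g'') A) ∧
      ‖f''‖ + ‖A‖ * ‖g''‖ ≤ (‖f‖ + ‖A‖ * ‖g‖) * (‖f'‖ + ‖A‖ * ‖g'‖) := by
  obtain ⟨h, hh, hnh⟩ := hSmul f f'
  obtain ⟨q, hq, hnq⟩ := exists_convTT_convFT_eq hcomm hassoc₁ hSmul hSideal hA g g'
  obtain ⟨a, ha, hna⟩ := exists_convFT_convFT_eq hassoc₂ hSmul A f g'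
  obtain ⟨b, hb, hnb⟩ := exists_convFT_convFT_eq hassoc₂ hSmul A f' g
  refine ⟨h + q, a + b, by simp only [qmul, hh, hq, ha, hb, map_add, LinearMap.add_apply], ?_⟩
  calc ‖h + q‖ + ‖A‖ * ‖a + b‖
      ≤ ‖f‖ * ‖f'‖ + ‖A‖ * ‖A‖ * (‖g‖ * ‖g'‖) + ‖A‖ * (‖f‖ * ‖g'‖ + ‖f'‖ * ‖g‖) := by
        gcongr
        · exact (norm_add_le _ _).trans (add_le_add hnh hnq)
        · exact (norm_add_le _ _).trans (add_le_add hna hnb)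
    _ = (‖f‖ + ‖A‖ * ‖g‖) * (‖f'‖ + ‖A‖ * ‖g'‖) := by ring

end SegalAlgebra

theorem induced_quantum_segal_algebra
    (FW : T1 →ₗ[ℂ] (Phase n → ℂ))
    (convL1 : L1n n →ₗ[ℂ] L1n n →ₗ[ℂ] L1n n)
    (convTT : T1 →ₗ[ℂ] T1 →ₗ[ℂ] L1n n)
    (convFT : L1n n →ₗ[ℂ] T1 →ₗ[ℂ] T1)
    (shiftL : Phase n → (L1n n →ₗ[ℂ] L1n n))
    (shiftT : Phase n → (T1 →ₗ[ℂ] T1))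
    -- compatibility and norm bounds for the convolutions:
    (hFT : ∀ (f : L1n n) (T : T1) (z : Phase n), FW (convFT f T) z = symplFT f z * FW T z)
    (hFσinj : ∀ f : L1n n, (∀ z : Phase n, symplFT f z = 0) → f = 0)
    (hFTnorm : ∀ (f : L1n n) (T : T1), ‖convFT f T‖ ≤ ‖f‖ * ‖T‖)
    (hTTnorm : ∀ S T : T1, ‖convTT S T‖ ≤ ‖S‖ * ‖T‖)
    -- associativity relations of the convolutions:
    (hassoc1 : ∀ (u v : L1n n) (S T : T1),
      convTT (convFT u S) (convFT v T) = convL1 (convL1 u v) (convTT S T))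
    (hassoc2 : ∀ (u v : L1n n) (T : T1), convFT u (convFT v T) = convFT (convL1 u v) T)
    (hshiftFT : ∀ (z : Phase n) (f : L1n n) (T : T1),
      shiftT z (convFT f T) = convFT (shiftL z f) T)
    -- the Segal algebra `S`:
    (S : Type*) [NormedAddCommGroup S] [NormedSpace ℂ S]
    (ι₁ : S →ₗ[ℂ] L1n n) (hι₁inj : Function.Injective ι₁) (hSdense : DenseRange ι₁)
    (hSmul : ∀ f g : S, ∃ h : S, ι₁ h = convL1 (ι₁ f) (ι₁ g) ∧ ‖h‖ ≤ ‖f‖ * ‖g‖)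
    (hSideal : ∀ (f : L1n n) (g : S), ∃ h : S, ι₁ h = convL1 f (ι₁ g) ∧ ‖h‖ ≤ ‖f‖ * ‖g‖)
    (hSshift : ∀ (z : Phase n) (f : S), ∃ g : S, ι₁ g = shiftL z (ι₁ f) ∧ ‖g‖ = ‖f‖)
    -- the regular operator `A₀` and Werner's approximation theorem:
    (A₀ : T1) (hreg : ∀ z : Phase n, FW A₀ z ≠ 0)
    (hWerner : Dense {B : T1 | ∃ f : L1n n, B = convFT f A₀}) :
    -- the norm on `S^{A₀}` is well defined: `g ∗ A₀` determines `g`: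
    (∀ g g' : S, convFT (ι₁ g) A₀ = convFT (ι₁ g') A₀ → g = g') ∧
    -- `S^{A₀}` is dense in `L¹ ⊕ T¹`:
    Dense {p : L1n n × T1 | ∃ f g : S, p = (ι₁ f, convFT (ι₁ g) A₀)} ∧
    -- `S^{A₀}` is closed under the product, with the Banach algebra norm estimate:
    (∀ f g f' g' : S, ∃ f'' g'' : S,
      qmul T1 convL1 convTT convFT (ι₁ f, convFT (ι₁ g) A₀) (ι₁ f', convFT (ι₁ g') A₀)
        = (ι₁ f'', convFT (ι₁ g'') A₀) ∧
      ‖f''‖ + ‖A₀‖ * ‖g''‖ ≤ (‖f‖ + ‖A₀‖ * ‖g‖) * (‖f'‖ + ‖A₀‖ * ‖g'‖)) ∧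
    -- `S^{A₀}` is shift-invariant with isometric shifts:
    (∀ (z : Phase n) (f g : S), ∃ f' g' : S,
      (shiftL z (ι₁ f), shiftT z (convFT (ι₁ g) A₀)) = (ι₁ f', convFT (ι₁ g') A₀) ∧
      ‖f'‖ + ‖A₀‖ * ‖g'‖ = ‖f‖ + ‖A₀‖ * ‖g‖) := by
  have hcomm := convL1_comm hFT hassoc2 hFσinj hreg
  have hconvFT_cont : Continuous (convFT.flip A₀) :=
    AddMonoidHomClass.continuous_of_bound (convFT.flip A₀) ‖A₀‖ fun u =>
      (hFTnorm u A₀).trans_eq (mul_comm _ _)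
  have hconvFT_dense : DenseRange (convFT.flip A₀) :=
    hWerner.mono (by rintro _ ⟨u, rfl⟩; exact ⟨u, rfl⟩)
  refine ⟨fun g g' h => hι₁inj (injective_flip_convFT hFT hFσinj hreg h), ?_,
    exists_qmul_eq hcomm hassoc1 hassoc2 hSmul hSideal (hTTnorm A₀ A₀), ?_⟩
  · refine (hSdense.prodMap (hconvFT_dense.comp hSdense hconvFT_cont)).mono ?_
    rintro _ ⟨⟨f, g⟩, rfl⟩
    exact ⟨f, g, rfl⟩
  · intro z f g
    obtain ⟨f', hf', hnf'⟩ := hSshift z f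
    obtain ⟨g', hg', hng'⟩ := hSshift z g
    exact ⟨f', g', by rw [hshiftFT, ← hf', ← hg'], by rw [hnf', hng']⟩
end
end
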